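/- Let Λ be an s-finite measure on a measurable space (E, ℰ), let ξ be a Poisson point process with mean measure Λ, and let f : E → [0, ∞) be measurable with ∫ (f ∧ 1) dΛ < ∞. If ∫ f dξ equals a constant c ∈ [0, ∞) almost surely, then for all t ≥ 0, tc = ∫ (1 − e^{−t f(y)}) Λ(dy), and consequently f = 0 Λ-almost everywhere and c = 0. -/

import Mathlib

open MeasureTheory ProbabilityTheory ENNReal

/-- Probability that a Poisson random variable with mean `r ∈ [0,∞]` equals `n`;
when `r = ∞` the variable is almost surely `∞`, so each finite value has probability `0`. -/
noncomputable def poissonProb (r : ℝ≥0∞) (n : ℕ) : ℝ≥0∞ :=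
  if r = ∞ then 0
  else ENNReal.ofReal (Real.exp (-(r.toReal)) * r.toReal ^ n / n.factorial)

/-- `ξ` is a Poisson point process on `E` with mean measure `Λ`, under the probability
measure `P`: counts on measurable sets are measurable, Poisson distributed with the
prescribed mean, and independent over disjoint sets. -/
def IsPoissonPP {Ω E : Type*} [MeasurableSpace Ω] [MeasurableSpace E]
    (P : Measure Ω) (ξ : Ω → Measure E) (Λ : Measure E) : Prop :=
  (∀ A : Set E, MeasurableSet A → Measurable fun ω => ξ ω A) ∧
  (∀ A : Set E, MeasurableSet A →
    ((∀ n : ℕ, P {ω | ξ ω A = n} = poissonProb (Λ A) n) ∧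
      (Λ A = ∞ → ∀ᵐ ω ∂P, ξ ω A = ∞))) ∧
  (∀ (m : ℕ) (A : Fin m → Set E), (∀ i, MeasurableSet (A i)) →
    Pairwise (Function.onFun Disjoint A) →
    iIndepFun (fun i ω => ξ ω (A i)) P)

section Aux

lemma real_exp_tsum (x : ℝ) : ∑' n : ℕ, x ^ n / n.factorial = Real.exp x := by
  rw [Real.exp_eq_exp_ℝ, NormedSpace.exp_eq_tsum_div]

lemma poissonProb_tsum {r : ℝ≥0∞} (hr : r ≠ ∞) : ∑' n, poissonProb r n = 1 := by
  set x := r.toReal with hx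
  have hx0 : 0 ≤ x := ENNReal.toReal_nonneg
  have hterm : ∀ n : ℕ, 0 ≤ Real.exp (-x) * x ^ n / n.factorial := fun n =>
    div_nonneg (mul_nonneg (Real.exp_pos _).le (pow_nonneg hx0 n)) (Nat.cast_nonneg _)
  have hsum : Summable fun n : ℕ => Real.exp (-x) * x ^ n / n.factorial := by
    simpa [mul_div_assoc] using (Real.summable_pow_div_factorial x).mul_left (Real.exp (-x))
  have h1 : ∀ n : ℕ, poissonProb r n
      = ENNReal.ofReal (Real.exp (-x) * x ^ n / n.factorial) := fun n => by
    simp [poissonProb, hr, hx]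
  rw [tsum_congr h1, ← ENNReal.ofReal_tsum_of_nonneg hterm hsum]
  have h2 : ∑' n : ℕ, Real.exp (-x) * x ^ n / n.factorial = Real.exp (-x) * Real.exp x := by
    rw [← real_exp_tsum x, ← tsum_mul_left]
    exact tsum_congr fun n => (mul_div_assoc _ _ _)
  rw [h2, ← Real.exp_add]
  simp

lemma poissonProb_mean {r : ℝ≥0∞} (hr : r ≠ ∞) :
    ∑' n : ℕ, (n : ℝ≥0∞) * poissonProb r n = r := by
  set x := r.toReal with hx
  have hx0 : 0 ≤ x := ENNReal.toReal_nonneg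
  have key : ∀ m : ℕ, ((m + 1 : ℕ) : ℝ) * (Real.exp (-x) * x ^ (m + 1) / (m + 1).factorial)
      = Real.exp (-x) * x * (x ^ m / m.factorial) := by
    intro m
    have hm : ((m : ℝ) + 1) ≠ 0 := by positivity
    have hfac : (m.factorial : ℝ) ≠ 0 := Nat.cast_ne_zero.2 m.factorial_ne_zero
    rw [Nat.factorial_succ, pow_succ]
    push_cast
    field_simp
  have hq : Summable fun n : ℕ => (n : ℝ) * (Real.exp (-x) * x ^ n / n.factorial) := by
    rw [← summable_nat_add_iff 1]
    have : Summable fun m : ℕ => Real.exp (-x) * x * (x ^ m / m.factorial) :=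
      (Real.summable_pow_div_factorial x).mul_left _
    refine this.congr fun m => ?_
    exact (key m).symm
  have hterm : ∀ n : ℕ, 0 ≤ (n : ℝ) * (Real.exp (-x) * x ^ n / n.factorial) := fun n =>
    mul_nonneg (Nat.cast_nonneg _)
      (div_nonneg (mul_nonneg (Real.exp_pos _).le (pow_nonneg hx0 n)) (Nat.cast_nonneg _))
  have hsum : ∑' n : ℕ, (n : ℝ) * (Real.exp (-x) * x ^ n / n.factorial) = x := by
    rw [hq.tsum_eq_zero_add]
    have h0 : ((0 : ℕ) : ℝ) * (Real.exp (-x) * x ^ 0 / (0 : ℕ).factorial) = 0 := by simp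
    rw [h0, zero_add, tsum_congr key, tsum_mul_left, real_exp_tsum,
      mul_comm (Real.exp (-x)) x, mul_assoc, ← Real.exp_add]
    simp
  have h1 : ∀ n : ℕ, (n : ℝ≥0∞) * poissonProb r n
      = ENNReal.ofReal ((n : ℝ) * (Real.exp (-x) * x ^ n / n.factorial)) := by
    intro n
    rw [poissonProb, if_neg hr, ← ENNReal.ofReal_natCast n,
      ← ENNReal.ofReal_mul (Nat.cast_nonneg n)]
  rw [tsum_congr h1, ← ENNReal.ofReal_tsum_of_nonneg hterm hq, hsum,
    ENNReal.ofReal_toReal hr]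

variable {Ω E : Type*} [MeasurableSpace Ω] [MeasurableSpace E]
    (P : Measure Ω) [IsProbabilityMeasure P] (Λ : Measure E)
    (ξ : Ω → Measure E) (hξ : IsPoissonPP P ξ Λ)

lemma pp_ae_nat (hξ : IsPoissonPP P ξ Λ) {A : Set E} (hA : MeasurableSet A) (hΛ : Λ A ≠ ∞) :
    ∀ᵐ ω ∂P, ∃ n : ℕ, ξ ω A = n := by
  have hmeas := hξ.1 A hA
  have hdist := (hξ.2.1 A hA).1
  have hms : ∀ n : ℕ, MeasurableSet {ω | ξ ω A = (n : ℝ≥0∞)} := fun n =>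
    hmeas (measurableSet_singleton _)
  have hU : P (⋃ n : ℕ, {ω | ξ ω A = (n : ℝ≥0∞)}) = 1 := by
    rw [measure_iUnion ?_ hms]
    · rw [tsum_congr fun n => hdist n]
      exact poissonProb_tsum hΛ
    · intro m n hmn
      have : Disjoint {ω | ξ ω A = (m : ℝ≥0∞)} {ω | ξ ω A = (n : ℝ≥0∞)} := by
        rw [Set.disjoint_left]
        intro ω h1 h2
        simp only [Set.mem_setOf_eq] at h1 h2
        exact hmn (by exact_mod_cast h1.symm.trans h2)
      exact this
  rw [ae_iff]
  have hset : {ω | ¬∃ n : ℕ, ξ ω A = (n : ℝ≥0∞)}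
      = (⋃ n : ℕ, {ω | ξ ω A = (n : ℝ≥0∞)})ᶜ := by
    ext ω; simp
  rw [hset]
  exact (prob_compl_eq_zero_iff (MeasurableSet.iUnion hms)).2 hU

lemma pp_mean (hξ : IsPoissonPP P ξ Λ) {A : Set E} (hA : MeasurableSet A) :
    ∫⁻ ω, ξ ω A ∂P = Λ A := by
  by_cases hΛ : Λ A = ∞
  · have hinf : ∀ᵐ ω ∂P, ξ ω A = (⊤ : ℝ≥0∞) := (hξ.2.1 A hA).2 hΛ
    rw [lintegral_congr_ae (g := fun _ => (⊤ : ℝ≥0∞)) hinf, lintegral_const, hΛ]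
    simp
  · have hdist := (hξ.2.1 A hA).1
    have hmeas := hξ.1 A hA
    have hms : ∀ n : ℕ, MeasurableSet {ω | ξ ω A = (n : ℝ≥0∞)} := fun n =>
      hmeas (measurableSet_singleton _)
    have hae := pp_ae_nat P Λ ξ hξ hA hΛ
    have heq : ∀ᵐ ω ∂P, ξ ω A
        = ∑' n : ℕ, Set.indicator {ω' | ξ ω' A = (n : ℝ≥0∞)} (fun _ => (n : ℝ≥0∞)) ω := by
      filter_upwards [hae] with ω hω
      obtain ⟨m, hm⟩ := hω
      have hz : ∀ n : ℕ, n ≠ m →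
          Set.indicator {ω' | ξ ω' A = (n : ℝ≥0∞)} (fun _ => (n : ℝ≥0∞)) ω = 0 := by
        intro n hn
        refine Set.indicator_of_notMem (fun h => hn ?_) _
        exact_mod_cast (h : ξ ω A = (n : ℝ≥0∞)).symm.trans hm
      rw [tsum_eq_single m hz,
        Set.indicator_of_mem (show ω ∈ {ω' | (ξ ω') A = ((m : ℕ) : ℝ≥0∞)} from hm)]
      exact hm
    rw [lintegral_congr_ae heq,
      lintegral_tsum fun n => (measurable_const.indicator (hms n)).aemeasurable]
    have h3 : ∀ n : ℕ,
        (∫⁻ ω, Set.indicator {ω' | ξ ω' A = (n : ℝ≥0∞)} (fun _ => (n : ℝ≥0∞)) ω ∂P)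
          = (n : ℝ≥0∞) * poissonProb (Λ A) n := by
      intro n
      rw [lintegral_indicator_const (hms n), hdist n]
    rw [tsum_congr h3]
    exact poissonProb_mean hΛ

lemma pp_campbell (hξ : IsPoissonPP P ξ Λ) {g : E → ℝ≥0∞} (hg : Measurable g) :
    Measurable (fun ω => ∫⁻ y, g y ∂ξ ω) ∧
      ∫⁻ ω, ∫⁻ y, g y ∂ξ ω ∂P = ∫⁻ y, g y ∂Λ := by
  refine Measurable.ennreal_induction
    (motive := fun g => Measurable (fun ω => ∫⁻ y, g y ∂ξ ω) ∧
      ∫⁻ ω, ∫⁻ y, g y ∂ξ ω ∂P = ∫⁻ y, g y ∂Λ) ?_ ?_ ?_ hg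
  · intro c s hs
    constructor
    · simp_rw [lintegral_indicator_const hs]
      exact (hξ.1 s hs).const_mul c
    · simp_rw [lintegral_indicator_const hs]
      rw [lintegral_const_mul c (hξ.1 s hs), pp_mean P Λ ξ hξ hs]
  · intro u v _ hum hvm hu hv
    constructor
    · simp_rw [Pi.add_apply, lintegral_add_left hum]
      exact hu.1.add hv.1
    · simp_rw [Pi.add_apply, lintegral_add_left hum]
      rw [lintegral_add_left hu.1, hu.2, hv.2]
  · intro u hum hmono hind
    have h1 : ∀ μ : Measure E, ∫⁻ y, ⨆ n, u n y ∂μ = ⨆ n, ∫⁻ y, u n y ∂μ := fun μ =>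
      lintegral_iSup hum hmono
    constructor
    · simp_rw [h1]
      exact Measurable.iSup fun n => (hind n).1
    · simp_rw [h1]
      rw [lintegral_iSup (fun n => (hind n).1)
        (fun n m hnm ω => lintegral_mono fun y => hmono hnm y)]
      exact iSup_congr fun n => (hind n).2

lemma pp_ae_fin (hξ : IsPoissonPP P ξ Λ)
    (f : E → ℝ) (hf : Measurable f) (hf0 : ∀ y, 0 ≤ f y)
    (hint : ∫⁻ y, min (ENNReal.ofReal (f y)) 1 ∂Λ < ∞) :
    ∀ᵐ ω ∂P, ∫⁻ y, ENNReal.ofReal (f y) ∂ξ ω < ∞ := by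
  set F : E → ℝ≥0∞ := fun y => ENNReal.ofReal (f y) with hF
  have hFm : Measurable F := hf.ennreal_ofReal
  set T : Set E := {y | 1 ≤ f y} with hT
  have hTm : MeasurableSet T := measurableSet_le measurable_const hf
  -- small part
  have hsmall_le : ∀ y, Tᶜ.indicator F y ≤ min (F y) 1 := by
    intro y
    by_cases hy : y ∈ Tᶜ
    · rw [Set.indicator_of_mem hy]
      have : f y < 1 := not_le.1 hy
      exact le_min le_rfl (ENNReal.ofReal_le_one.2 this.le)
    · rw [Set.indicator_of_notMem hy]
      exact zero_le'
  have hsmallm : Measurable (Tᶜ.indicator F) := hFm.indicator hTm.compl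
  have hsmall_fin : ∫⁻ y, Tᶜ.indicator F y ∂Λ < ∞ :=
    lt_of_le_of_lt (lintegral_mono hsmall_le) hint
  have hsmall_ae : ∀ᵐ ω ∂P, ∫⁻ y, Tᶜ.indicator F y ∂ξ ω < ∞ := by
    refine ae_lt_top (pp_campbell P Λ ξ hξ hsmallm).1 ?_
    rw [(pp_campbell P Λ ξ hξ hsmallm).2]
    exact hsmall_fin.ne
  -- big part
  set B : ℕ → Set E := fun k => {y | ((k : ℝ) + 1 ≤ f y) ∧ f y < (k : ℝ) + 2} with hB
  have hBm : ∀ k, MeasurableSet (B k) :=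
    fun k => (measurableSet_le measurable_const hf).inter (measurableSet_lt hf measurable_const)
  have hBdisj : Pairwise (Function.onFun Disjoint B) := by
    intro j k hjk
    rw [Function.onFun, Set.disjoint_left]
    rintro y ⟨hj1, hj2⟩ ⟨hk1, hk2⟩
    rcases lt_or_gt_of_ne hjk with h | h
    · have : (j : ℝ) + 1 ≤ (k : ℝ) := by exact_mod_cast by omega
      linarith
    · have : (k : ℝ) + 1 ≤ (j : ℝ) := by exact_mod_cast by omega
      linarith
  have hBT : (⋃ k, B k) = T := by
    ext y
    simp only [Set.mem_iUnion, hB, Set.mem_setOf_eq, hT]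
    constructor
    · rintro ⟨k, hk1, _⟩
      have : (1 : ℝ) ≤ (k : ℝ) + 1 := le_add_of_nonneg_left (Nat.cast_nonneg k)
      linarith
    · intro hy
      refine ⟨⌊f y - 1⌋₊, ?_, ?_⟩
      · have := Nat.floor_le (by linarith : (0:ℝ) ≤ f y - 1)
        linarith
      · have := Nat.lt_floor_add_one (f y - 1)
        linarith
  have hTfin : Λ T < ∞ := by
    have h1 : Λ T = ∫⁻ y in T, 1 ∂Λ := by rw [setLIntegral_const, one_mul]
    have h2 : ∫⁻ y in T, 1 ∂Λ ≤ ∫⁻ y in T, min (F y) 1 ∂Λ := by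
      refine setLIntegral_mono (hFm.min measurable_const) fun y hy => ?_
      exact le_min (by simpa [hF] using ENNReal.one_le_ofReal.2 hy) le_rfl
    calc Λ T = ∫⁻ y in T, 1 ∂Λ := h1
      _ ≤ ∫⁻ y in T, min (F y) 1 ∂Λ := h2
      _ ≤ ∫⁻ y, min (F y) 1 ∂Λ := setLIntegral_le_lintegral _ _
      _ < ∞ := hint
  have hsumB : ∑' k, Λ (B k) = Λ T := by rw [← measure_iUnion hBdisj hBm, hBT]
  have hBfin : ∀ k, Λ (B k) ≠ ∞ := by
    intro k
    refine (lt_of_le_of_lt (measure_mono ?_) hTfin).ne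
    rw [← hBT]; exact Set.subset_iUnion B k
  have hMarkov : ∀ k, P {ω | 1 ≤ ξ ω (B k)} ≤ Λ (B k) := by
    intro k
    have := mul_meas_ge_le_lintegral₀ (μ := P) (hξ.1 (B k) (hBm k)).aemeasurable 1
    rw [one_mul, pp_mean P Λ ξ hξ (hBm k)] at this
    exact this
  have hBC : ∀ᵐ ω ∂P, ∀ᶠ k in Filter.atTop, ω ∉ {ω | 1 ≤ ξ ω (B k)} := by
    refine MeasureTheory.ae_eventually_notMem ?_
    refine (lt_of_le_of_lt (ENNReal.tsum_le_tsum hMarkov) ?_).ne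
    rw [hsumB]; exact hTfin
  have hnat : ∀ᵐ ω ∂P, ∀ k, ∃ n : ℕ, ξ ω (B k) = n :=
    (ae_all_iff).2 fun k => pp_ae_nat P Λ ξ hξ (hBm k) (hBfin k)
  filter_upwards [hBC, hnat, hsmall_ae] with ω hev hn hsm
  have hzero : ∃ K : ℕ, ∀ k, K ≤ k → ξ ω (B k) = 0 := by
    obtain ⟨K, hK⟩ := Filter.eventually_atTop.1 hev
    refine ⟨K, fun k hk => ?_⟩
    obtain ⟨n, hnk⟩ := hn k
    have hlt : ξ ω (B k) < 1 := not_le.1 (hK k hk)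
    rw [hnk] at hlt ⊢
    have : n < 1 := by exact_mod_cast hlt
    interval_cases n
    simp
  obtain ⟨K, hK⟩ := hzero
  have hbig : ∫⁻ y, T.indicator F y ∂ξ ω < ∞ := by
    rw [lintegral_indicator hTm, ← hBT, lintegral_iUnion hBm hBdisj]
    have hzero' : ∀ k ∉ Finset.range K, ∫⁻ y in B k, F y ∂ξ ω = 0 := by
      intro k hk
      rw [Measure.restrict_eq_zero.2 (hK k (by simpa using hk))]
      exact lintegral_zero_measure _
    rw [tsum_eq_sum hzero']
    refine ENNReal.sum_lt_top.2 fun k _ => ?_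
    have hb : ∫⁻ y in B k, F y ∂ξ ω ≤ ENNReal.ofReal ((k : ℝ) + 2) * ξ ω (B k) := by
      rw [← setLIntegral_const]
      exact setLIntegral_mono measurable_const fun y hy => ENNReal.ofReal_le_ofReal hy.2.le
    refine lt_of_le_of_lt hb ?_
    obtain ⟨n, hnk⟩ := hn k
    rw [hnk]
    exact ENNReal.mul_lt_top ENNReal.ofReal_lt_top (ENNReal.natCast_lt_top n)
  have hdecomp : ∫⁻ y, F y ∂ξ ω
      = ∫⁻ y, T.indicator F y ∂ξ ω + ∫⁻ y, Tᶜ.indicator F y ∂ξ ω := by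
    rw [← lintegral_add_left (hFm.indicator hTm)]
    refine lintegral_congr fun y => ?_
    rw [← Pi.add_apply, Set.indicator_self_add_compl T F]
  rw [hdecomp]
  exact ENNReal.add_lt_top.2 ⟨hbig, hsm⟩

end Aux

/-- If the Poisson integral `∫ f dξ` of a nonnegative integrand is a.s. equal to a constant
`c ∈ [0,∞)`, then `t c = ∫ (1 - e^{-t f}) dΛ` for all `t ≥ 0`, and consequently `f = 0`
`Λ`-a.e. and `c = 0`. -/
theorem poisson_integral_constant {Ω E : Type*} [MeasurableSpace Ω] [MeasurableSpace E]
    (P : Measure Ω) [IsProbabilityMeasure P] (Λ : Measure E) [SFinite Λ]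
    (ξ : Ω → Measure E) (hξ : IsPoissonPP P ξ Λ)
    (f : E → ℝ) (hf : Measurable f) (hf0 : ∀ y, 0 ≤ f y)
    (hint : ∫⁻ y, min (ENNReal.ofReal (f y)) 1 ∂Λ < ∞)
    (c : ℝ) (hc0 : 0 ≤ c) (hc : ∀ᵐ ω ∂P, ∫ y, f y ∂(ξ ω) = c) :
    (∀ t : ℝ, 0 ≤ t → t * c = ∫ y, (1 - Real.exp (-t * f y)) ∂Λ) ∧
      (∀ᵐ y ∂Λ, f y = 0) ∧ c = 0 := by
  haveI : (ae P).NeBot := ae_neBot.2 (IsProbabilityMeasure.ne_zero P)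
  set F : E → ℝ≥0∞ := fun y => ENNReal.ofReal (f y) with hF
  have hFm : Measurable F := hf.ennreal_ofReal
  have hfin : ∀ᵐ ω ∂P, ∫⁻ y, F y ∂ξ ω < ∞ := pp_ae_fin P Λ ξ hξ f hf hf0 hint
  -- Step 1: sets where f is bounded below are Λ-null
  have hkey : ∀ ε : ℝ, 0 < ε → ε ≤ 1 → Λ {y | ε ≤ f y} = 0 := by
    intro ε hε hε1
    set B : Set E := {y | ε ≤ f y} with hBdef
    have hB : MeasurableSet B := measurableSet_le measurable_const hf
    have hBfin : Λ B ≠ ∞ := by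
      intro htop
      have h1 : ENNReal.ofReal ε * Λ B ≤ ∫⁻ y, min (F y) 1 ∂Λ := by
        rw [← setLIntegral_const B (ENNReal.ofReal ε)]
        calc ∫⁻ _ in B, ENNReal.ofReal ε ∂Λ
            ≤ ∫⁻ y in B, min (F y) 1 ∂Λ := by
              refine setLIntegral_mono (hFm.min measurable_const) fun y hy => ?_
              exact le_min (ENNReal.ofReal_le_ofReal hy) (ENNReal.ofReal_le_one.2 hε1)
          _ ≤ ∫⁻ y, min (F y) 1 ∂Λ := setLIntegral_le_lintegral _ _
      rw [htop, ENNReal.mul_top (by simpa using (ENNReal.ofReal_pos.2 hε).ne')] at h1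
      exact (lt_irrefl _ (lt_of_le_of_lt h1 hint)).elim
    by_contra hB0
    obtain ⟨k, hk⟩ := exists_nat_gt (c / ε)
    have hck : c < ε * k := by
      have := (div_lt_iff₀ hε).1 hk
      linarith
    have hpos : 0 < P {ω | ξ ω B = ((k : ℕ) : ℝ≥0∞)} := by
      rw [(hξ.2.1 B hB).1 k, poissonProb, if_neg hBfin]
      refine ENNReal.ofReal_pos.2 ?_
      have hx : 0 < (Λ B).toReal := ENNReal.toReal_pos hB0 hBfin
      positivity
    have hfreq : ∃ᵐ ω ∂P, ω ∈ {ω | ξ ω B = ((k : ℕ) : ℝ≥0∞)} :=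
      frequently_ae_mem_iff.2 hpos.ne'
    obtain ⟨ω, ⟨hωc, hωfin⟩, hωk⟩ := ((hc.and hfin).and_frequently hfreq).exists
    have hint_eq : ∫ y, f y ∂ξ ω = (∫⁻ y, F y ∂ξ ω).toReal :=
      integral_eq_lintegral_of_nonneg_ae (Filter.Eventually.of_forall hf0)
        hf.aestronglyMeasurable
    have hlow : ENNReal.ofReal ε * ((k : ℕ) : ℝ≥0∞) ≤ ∫⁻ y, F y ∂ξ ω := by
      have h0 : ENNReal.ofReal ε * ((k : ℕ) : ℝ≥0∞) = ∫⁻ _ in B, ENNReal.ofReal ε ∂ξ ω := by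
        rw [setLIntegral_const, hωk]
      rw [h0]
      calc ∫⁻ _ in B, ENNReal.ofReal ε ∂ξ ω
          ≤ ∫⁻ y in B, F y ∂ξ ω :=
            setLIntegral_mono hFm fun y hy => ENNReal.ofReal_le_ofReal hy
        _ ≤ ∫⁻ y, F y ∂ξ ω := setLIntegral_le_lintegral _ _
    have hle : ε * k ≤ c := by
      have h1 := ENNReal.toReal_mono hωfin.ne hlow
      rw [ENNReal.toReal_mul, ENNReal.toReal_ofReal hε.le] at h1
      simp only [ENNReal.toReal_natCast] at h1
      rw [← hωc, hint_eq]
      exact h1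
    exact absurd hle (not_le.2 hck)
  -- Step 2: f = 0 a.e. Λ
  have hU : {y | ¬ f y = 0} ⊆ ⋃ m : ℕ, {y | 1 / ((m : ℝ) + 1) ≤ f y} := by
    intro y hy
    have hpos : 0 < f y := lt_of_le_of_ne (hf0 y) (Ne.symm hy)
    obtain ⟨m, hm⟩ := exists_nat_one_div_lt hpos
    exact Set.mem_iUnion.2 ⟨m, hm.le⟩
  have hnull : Λ {y | ¬ f y = 0} = 0 := by
    refine measure_mono_null hU (measure_iUnion_null fun m => ?_)
    refine hkey _ (by positivity) ?_
    rw [div_le_one (by positivity)]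
    exact le_add_of_nonneg_left (Nat.cast_nonneg m)
  have hae0 : ∀ᵐ y ∂Λ, f y = 0 := by rw [ae_iff]; exact hnull
  -- Step 3: c = 0
  have hA : MeasurableSet {y | ¬ f y = 0} := (hf (measurableSet_singleton 0)).compl
  have hP0 : P {ω | ξ ω {y | ¬ f y = 0} = ((0 : ℕ) : ℝ≥0∞)} = 1 := by
    rw [(hξ.2.1 _ hA).1 0, poissonProb, hnull]
    simp
  have hone : ∀ᵐ ω ∂P, ξ ω {y | ¬ f y = 0} = ((0 : ℕ) : ℝ≥0∞) := by
    rw [ae_iff]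
    have hms : MeasurableSet {ω | ξ ω {y | ¬ f y = 0} = ((0 : ℕ) : ℝ≥0∞)} :=
      hξ.1 _ hA (measurableSet_singleton _)
    have : {ω | ¬ ξ ω {y | ¬ f y = 0} = ((0 : ℕ) : ℝ≥0∞)}
        = {ω | ξ ω {y | ¬ f y = 0} = ((0 : ℕ) : ℝ≥0∞)}ᶜ := rfl
    rw [this]
    exact (prob_compl_eq_zero_iff hms).2 hP0
  have hc0' : c = 0 := by
    obtain ⟨ω, hω1, hω2⟩ := (hone.and hc).exists
    have hzero : ∀ᵐ y ∂ξ ω, f y = 0 := by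
      rw [ae_iff]
      refine measure_mono_null (subset_refl _) ?_
      simpa using hω1
    have hz : ∫ y, f y ∂ξ ω = 0 := by
      rw [integral_congr_ae (g := fun _ => (0 : ℝ)) (hzero.mono fun y hy => hy), integral_zero]
    rw [← hω2, hz]
  refine ⟨?_, hae0, hc0'⟩
  intro t ht
  have hzero : (fun y => 1 - Real.exp (-t * f y)) =ᵐ[Λ] fun _ => (0 : ℝ) := by
    filter_upwards [hae0] with y hy
    simp [hy]
  rw [hc0', mul_zero, integral_congr_ae hzero, integral_zero]
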